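/- arXiv:1503.01348 — 3 statements merged into one kernel-verified Lean document; each statement's English description precedes it below -/
import Mathlib

section
/- If G is a !-tensor expression (i.e., a !-pretensor expression satisfying conditions F1, F2, C1, C2 and C3) and A is a !-box name, then Drop_A(G) is again a !-tensor expression. -/
/-!
Shared infrastructure for !-tensor expressions (Kissinger & Quick,
"Tensors, !-graphs, and non-commutative quantum structures").
-/

namespace BangTensor

/-- Edge names. -/
abbrev EdgeName : Type := ℕ
/-- !-box names (a set disjoint from edge names; modelled as a separate sort). -/
abbrev BoxName : Type := ℕ

/-- Directed edges: an output `â` or an input `ǎ`. -/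
inductive DirEdge : Type
  | out (a : EdgeName)
  | inp (a : EdgeName)
  deriving DecidableEq

namespace DirEdge

def name : DirEdge → EdgeName
  | out a => a
  | inp a => a

def partner : DirEdge → DirEdge
  | out a => inp a
  | inp a => out a

def rename (f : EdgeName → EdgeName) : DirEdge → DirEdge
  | out a => out (f a)
  | inp a => inp (f a)

end DirEdge

/-- A freshness function: a pair of bijections on edge names and !-box names. -/
structure Freshness : Type where
  em : EdgeName ≃ EdgeName
  bm : BoxName ≃ BoxName

/-- Edgeterms: built from the empty edgeterm, directed edges, clockwise
and anticlockwise edge groups, and concatenation. -/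
inductive EdgeTerm : Type
  | eps
  | edge (d : DirEdge)
  | cw (e : EdgeTerm) (A : BoxName)
  | acw (e : EdgeTerm) (A : BoxName)
  | cat (e f : EdgeTerm)
  deriving DecidableEq

namespace EdgeTerm

/-- Number of occurrences of a directed edge in an edgeterm. -/
def count (d : DirEdge) : EdgeTerm → ℕ
  | eps => 0
  | edge d' => if d' = d then 1 else 0
  | cw e _ => e.count d
  | acw e _ => e.count d
  | cat e f => e.count d + f.count d

/-- Edge context of a directed edge inside an edgeterm: the list of !-boxes
(edge groups) containing it, inside-out. -/
def ectx (d : DirEdge) : EdgeTerm → Option (List BoxName)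
  | eps => none
  | edge d' => if d' = d then some [] else none
  | cw e A => (e.ectx d).map (· ++ [A])
  | acw e A => (e.ectx d).map (· ++ [A])
  | cat e f => (e.ectx d).orElse (fun _ => f.ectx d)

def edgeNames : EdgeTerm → Set EdgeName
  | eps => ∅
  | edge d => {d.name}
  | cw e _ => e.edgeNames
  | acw e _ => e.edgeNames
  | cat e f => e.edgeNames ∪ f.edgeNames

def boxNames : EdgeTerm → Set BoxName
  | eps => ∅
  | edge _ => ∅
  | cw e A => insert A e.boxNames
  | acw e A => insert A e.boxNames
  | cat e f => e.boxNames ∪ f.boxNames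

def rename (f : EdgeName → EdgeName) (g : BoxName → BoxName) : EdgeTerm → EdgeTerm
  | eps => eps
  | edge d => edge (d.rename f)
  | cw e A => cw (e.rename f g) (g A)
  | acw e A => acw (e.rename f g) (g A)
  | cat e f' => cat (e.rename f g) (f'.rename f g)

/-- Rename the output edge `b̂` to `ĉ`. -/
def renameOut (b c : EdgeName) : EdgeTerm → EdgeTerm
  | eps => eps
  | edge (.out a) => edge (.out (if a = b then c else a))
  | edge (.inp a) => edge (.inp a)
  | cw e A => cw (e.renameOut b c) A
  | acw e A => acw (e.renameOut b c) A
  | cat e f => cat (e.renameOut b c) (f.renameOut b c)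

/-- Rename the input edge `b̌` to `č`. -/
def renameInp (b c : EdgeName) : EdgeTerm → EdgeTerm
  | eps => eps
  | edge (.out a) => edge (.out a)
  | edge (.inp a) => edge (.inp (if a = b then c else a))
  | cw e A => cw (e.renameInp b c) A
  | acw e A => acw (e.renameInp b c) A
  | cat e f => cat (e.renameInp b c) (f.renameInp b c)

/-- The operation `Kill_A` on edgeterms. -/
def kill (A : BoxName) : EdgeTerm → EdgeTerm
  | eps => eps
  | edge d => edge d
  | cw e B => if B = A then eps else cw (e.kill A) B
  | acw e B => if B = A then eps else acw (e.kill A) B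
  | cat e f => cat (e.kill A) (f.kill A)

/-- The operation `Drop_A` on edgeterms. -/
def drop (A : BoxName) : EdgeTerm → EdgeTerm
  | eps => eps
  | edge d => edge d
  | cw e B => if B = A then e else cw (e.drop A) B
  | acw e B => if B = A then e else acw (e.drop A) B
  | cat e f => cat (e.drop A) (f.drop A)

/-- The operation `Exp_{A,fr}` on edgeterms. -/
def exp (A : BoxName) (fr : Freshness) : EdgeTerm → EdgeTerm
  | eps => eps
  | edge d => edge d
  | cw e B => if B = A then cat (cw e B) (e.rename fr.em fr.bm) else cw (e.exp A fr) B
  | acw e B => if B = A then cat (e.rename fr.em fr.bm) (acw e B) else acw (e.exp A fr) B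
  | cat e f => cat (e.exp A fr) (f.exp A fr)

/-- The operation `Copy_{A,fr}` on edgeterms. -/
def copy (A : BoxName) (fr : Freshness) : EdgeTerm → EdgeTerm
  | eps => eps
  | edge d => edge d
  | cw e B =>
      if B = A then cat (cw e B) (cw (e.rename fr.em fr.bm) (fr.bm A)) else cw (e.copy A fr) B
  | acw e B =>
      if B = A then cat (acw (e.rename fr.em fr.bm) (fr.bm A)) (acw e B) else acw (e.copy A fr) B
  | cat e f => cat (e.copy A fr) (f.copy A fr)

/-- An edgeterm with no edge groups (a concrete edgeterm). -/
def noGroups : EdgeTerm → Prop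
  | eps => True
  | edge _ => True
  | cw _ _ => False
  | acw _ _ => False
  | cat e f => e.noGroups ∧ f.noGroups

/-- Equivalence of edgeterms: associativity and unit laws for concatenation,
and removal of empty edge groups; closed under congruence. -/
inductive Equiv : EdgeTerm → EdgeTerm → Prop
  | refl (e) : Equiv e e
  | symm {e f} : Equiv e f → Equiv f e
  | trans {e f g} : Equiv e f → Equiv f g → Equiv e g
  | cat_congr {e e' f f'} : Equiv e e' → Equiv f f' → Equiv (cat e f) (cat e' f')
  | cw_congr {e e'} (A) : Equiv e e' → Equiv (cw e A) (cw e' A)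
  | acw_congr {e e'} (A) : Equiv e e' → Equiv (acw e A) (acw e' A)
  | assoc (e f g) : Equiv (cat (cat e f) g) (cat e (cat f g))
  | unit_left (e) : Equiv (cat eps e) e
  | unit_right (e) : Equiv (cat e eps) e
  | cw_eps (A) : Equiv (cw eps A) eps
  | acw_eps (A) : Equiv (acw eps A) eps

end EdgeTerm

/-- !-pretensor expressions over a signature `σ`. -/
inductive Pretensor (σ : Type) : Type
  | unit
  | idt (a b : EdgeName)
  | gen (φ : σ) (e : EdgeTerm)
  | box (G : Pretensor σ) (A : BoxName)
  | prod (G H : Pretensor σ)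

namespace Pretensor

variable {σ : Type}

def edgeCount (d : DirEdge) : Pretensor σ → ℕ
  | unit => 0
  | idt a b => (if d = DirEdge.out a then 1 else 0) + (if d = DirEdge.inp b then 1 else 0)
  | gen _ e => e.count d
  | box G _ => G.edgeCount d
  | prod G H => G.edgeCount d + H.edgeCount d

def boxCount (A : BoxName) : Pretensor σ → ℕ
  | unit => 0
  | idt _ _ => 0
  | gen _ _ => 0
  | box G B => (if B = A then 1 else 0) + G.boxCount A
  | prod G H => G.boxCount A + H.boxCount A

/-- The pair (edge context, node context) of a directed edge, if it occurs. -/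
def ctx2 (d : DirEdge) : Pretensor σ → Option (List BoxName × List BoxName)
  | unit => none
  | idt a b => if d = DirEdge.out a ∨ d = DirEdge.inp b then some ([], []) else none
  | gen _ e => (e.ectx d).map (fun l => (l, []))
  | box G A => (G.ctx2 d).map (fun p => (p.1, p.2 ++ [A]))
  | prod G H => (G.ctx2 d).orElse (fun _ => H.ctx2 d)

/-- The edge context of a directed edge. -/
def ectxOf (G : Pretensor σ) (d : DirEdge) : Option (List BoxName) := (G.ctx2 d).map (·.1)

/-- The node context of a directed edge. -/
def nctxOf (G : Pretensor σ) (d : DirEdge) : Option (List BoxName) := (G.ctx2 d).map (·.2)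

/-- The (total) context of a directed edge: edge context followed by node context. -/
def ctxOf (G : Pretensor σ) (d : DirEdge) : Option (List BoxName) :=
  (G.ctx2 d).map (fun p => p.1 ++ p.2)

/-- The list of !-boxes enclosing the !-box `A`, inside-out, if `A` occurs. -/
def boxCtx (A : BoxName) : Pretensor σ → Option (List BoxName)
  | unit => none
  | idt _ _ => none
  | gen _ _ => none
  | box G B => if B = A then some [] else (G.boxCtx A).map (· ++ [B])
  | prod G H => (G.boxCtx A).orElse (fun _ => H.boxCtx A)

/-- `A ≺_G B`: the !-box `A` is nested immediately inside the !-box `B` in `G`. -/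
def Prec (G : Pretensor σ) (A B : BoxName) : Prop := ∃ l, G.boxCtx A = some (B :: l)

/-- `A` is nested (possibly not immediately) inside `B` in `G`. -/
def nestedIn (G : Pretensor σ) (A B : BoxName) : Prop := Relation.TransGen G.Prec A B

/-- `A` is a top-level !-box of `G` (it occurs and has no parent !-box). -/
def topLevel (G : Pretensor σ) (A : BoxName) : Prop := G.boxCtx A = some []

def edgeNames : Pretensor σ → Set EdgeName
  | unit => ∅
  | idt a b => {a, b}
  | gen _ e => e.edgeNames
  | box G _ => G.edgeNames
  | prod G H => G.edgeNames ∪ H.edgeNames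

def boxNames : Pretensor σ → Set BoxName
  | unit => ∅
  | idt _ _ => ∅
  | gen _ e => e.boxNames
  | box G A => insert A G.boxNames
  | prod G H => G.boxNames ∪ H.boxNames

/-- The directed edge `d` occurs in `G`. -/
def occursDir (G : Pretensor σ) (d : DirEdge) : Prop := G.edgeCount d ≠ 0

/-- The directed edge `d` is free in `G` (it occurs and its partner does not). -/
def freeDir (G : Pretensor σ) (d : DirEdge) : Prop := G.occursDir d ∧ ¬ G.occursDir d.partner

/-- The edge name `a` is free in `G`: exactly one of `â`, `ǎ` occurs in `G`. -/
def freeName (G : Pretensor σ) (a : EdgeName) : Prop :=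
  Xor' (G.occursDir (DirEdge.out a)) (G.occursDir (DirEdge.inp a))

/-- A !-tensor expression: a !-pretensor expression satisfying the freshness
conditions F1, F2 and the context conditions C1, C2, C3. -/
def IsTensorExpr (G : Pretensor σ) : Prop :=
  -- F1: each of `â` and `ǎ` occurs at most once per edge name
  (∀ d : DirEdge, G.edgeCount d ≤ 1) ∧
  -- F2: each !-box name has at most one occurrence of `[...]_A`
  (∀ A : BoxName, G.boxCount A ≤ 1) ∧
  -- C1: edge context and node context are disjoint
  (∀ (d : DirEdge) (ec nc : List BoxName), G.ctx2 d = some (ec, nc) → ec.Disjoint nc) ∧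
  -- C2: edge contexts consist of !-boxes of G, consecutively immediately nested
  (∀ (d : DirEdge) (ec nc : List BoxName), G.ctx2 d = some (ec, nc) →
    (∀ B ∈ ec, G.boxCount B ≠ 0) ∧ List.Chain' G.Prec ec) ∧
  -- C3: coherence for bound pairs
  (∀ (a : EdgeName) (eo no ei ni : List BoxName),
    G.ctx2 (DirEdge.out a) = some (eo, no) → G.ctx2 (DirEdge.inp a) = some (ei, ni) →
    ∃ es bs : List BoxName, es ++ ni = eo ++ bs ∧ es ++ no = ei ++ bs)

/-- Apply renamings of edge names and box names throughout a !-pretensor expression. -/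
def rename (f : EdgeName → EdgeName) (g : BoxName → BoxName) : Pretensor σ → Pretensor σ
  | unit => unit
  | idt a b => idt (f a) (f b)
  | gen φ e => gen φ (e.rename f g)
  | box G A => box (G.rename f g) (g A)
  | prod G H => prod (G.rename f g) (H.rename f g)

/-- Rename the output edge `b̂` to `ĉ`. -/
def renameOut (b c : EdgeName) : Pretensor σ → Pretensor σ
  | unit => unit
  | idt a y => idt (if a = b then c else a) y
  | gen φ e => gen φ (e.renameOut b c)
  | box G A => box (G.renameOut b c) A
  | prod G H => prod (G.renameOut b c) (H.renameOut b c)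

/-- Rename the input edge `b̌` to `č`. -/
def renameInp (b c : EdgeName) : Pretensor σ → Pretensor σ
  | unit => unit
  | idt a y => idt a (if y = b then c else y)
  | gen φ e => gen φ (e.renameInp b c)
  | box G A => box (G.renameInp b c) A
  | prod G H => prod (G.renameInp b c) (H.renameInp b c)

/-- Rename the edge name `a` (in both directions) to `c`. -/
def renameEdgeName (a c : EdgeName) (G : Pretensor σ) : Pretensor σ :=
  G.rename (fun x => if x = a then c else x) id

/-- Rename the !-box name `A` to `B`. -/
def renameBoxName (A B : BoxName) (G : Pretensor σ) : Pretensor σ :=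
  G.rename id (fun X => if X = A then B else X)

/-- The !-box operation `Kill_A`. -/
def kill (A : BoxName) : Pretensor σ → Pretensor σ
  | unit => unit
  | idt a b => idt a b
  | gen φ e => gen φ (e.kill A)
  | box G B => if B = A then unit else box (G.kill A) B
  | prod G H => prod (G.kill A) (H.kill A)

/-- The !-box operation `Drop_A`. -/
def drop (A : BoxName) : Pretensor σ → Pretensor σ
  | unit => unit
  | idt a b => idt a b
  | gen φ e => gen φ (e.drop A)
  | box G B => if B = A then G else box (G.drop A) B
  | prod G H => prod (G.drop A) (H.drop A)

/-- The !-box operation `Exp_{A,fr}`. -/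
def exp (A : BoxName) (fr : Freshness) : Pretensor σ → Pretensor σ
  | unit => unit
  | idt a b => idt a b
  | gen φ e => gen φ (e.exp A fr)
  | box G B => if B = A then prod (box G B) (G.rename fr.em fr.bm) else box (G.exp A fr) B
  | prod G H => prod (G.exp A fr) (H.exp A fr)

/-- The !-box operation `Copy_{A,fr}`. -/
def copy (A : BoxName) (fr : Freshness) : Pretensor σ → Pretensor σ
  | unit => unit
  | idt a b => idt a b
  | gen φ e => gen φ (e.copy A fr)
  | box G B =>
      if B = A then prod (box G B) (box (G.rename fr.em fr.bm) (fr.bm A))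
      else box (G.copy A fr) B
  | prod G H => prod (G.copy A fr) (H.copy A fr)

/-- Weakening `Wk_A^K`: add `K` inside the !-box `A`. -/
def wk (A : BoxName) (K : Pretensor σ) : Pretensor σ → Pretensor σ
  | box G B => if B = A then box (prod G K) B else box (wk A K G) B
  | prod G H => prod (wk A K G) (wk A K H)
  | G => G

/-- A concrete tensor expression: no !-boxes and no edge groups. -/
def IsConcrete : Pretensor σ → Prop
  | unit => True
  | idt _ _ => True
  | gen _ e => e.noGroups
  | box _ _ => False
  | prod G H => G.IsConcrete ∧ H.IsConcrete

/-- Nesting of !-boxes: `nest [(K₁,B₁),…,(Kₙ,Bₙ)] X = [Kₙ ⋯ [K₁ ⬝ X]_{B₁} ⋯]_{Bₙ}`. -/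
def nest : List (Pretensor σ × BoxName) → Pretensor σ → Pretensor σ
  | [], X => X
  | p :: rest, X => nest rest (box (prod p.1 X) p.2)

/-- Equivalence of !-tensor expressions: associativity, commutativity and unit
laws for product, edgeterm equivalences, renaming of bound edge names to fresh
names, and the identity-contraction laws. -/
inductive Equiv : Pretensor σ → Pretensor σ → Prop
  | refl (G) : Equiv G G
  | symm {G H} : Equiv G H → Equiv H G
  | trans {G H K} : Equiv G H → Equiv H K → Equiv G K
  | prod_congr {G G' H H'} : Equiv G G' → Equiv H H' → Equiv (prod G H) (prod G' H')
  | box_congr {G G'} (A) : Equiv G G' → Equiv (box G A) (box G' A)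
  | gen_congr (φ) {e e'} : EdgeTerm.Equiv e e' → Equiv (gen φ e) (gen φ e')
  | prod_assoc (G H K) : Equiv (prod (prod G H) K) (prod G (prod H K))
  | prod_comm (G H) : Equiv (prod G H) (prod H G)
  | prod_unit (G) : Equiv (prod G unit) G
  | bound_rename (G : Pretensor σ) (a c : EdgeName) :
      G.occursDir (DirEdge.out a) → G.occursDir (DirEdge.inp a) → c ∉ G.edgeNames →
      Equiv G (G.renameEdgeName a c)
  | contract_inp (G : Pretensor σ) (L : List (Pretensor σ × BoxName)) (a b : EdgeName) :
      G.occursDir (DirEdge.inp b) → ¬ G.occursDir (DirEdge.out b) →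
      Equiv (prod G (nest L (idt b a))) (prod (G.renameInp b a) (nest L unit))
  | contract_out (H : Pretensor σ) (L : List (Pretensor σ × BoxName)) (a b : EdgeName) :
      H.occursDir (DirEdge.out b) → ¬ H.occursDir (DirEdge.inp b) →
      Equiv (prod H (nest L (idt a b))) (prod (H.renameOut b a) (nest L unit))

/-- Rename the free edge names of `G` along `rn`. -/
def freeNameB (G : Pretensor σ) (a : EdgeName) : Bool :=
  (G.edgeCount (DirEdge.out a) != 0) ^^ (G.edgeCount (DirEdge.inp a) != 0)

end Pretensor

/-- Rename the free edge names of `G` along `rn`. -/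
def renameFree {σ : Type} (rn : EdgeName → EdgeName) (G : Pretensor σ) : Pretensor σ :=
  G.rename (fun a => if G.freeNameB a then rn a else a) id

/-- `fr` is a freshness function for `G`: names occurring in `G` are mapped
to names not occurring in `G`. -/
def Freshness.IsFreshFor {σ : Type} (fr : Freshness) (G : Pretensor σ) : Prop :=
  (∀ a ∈ G.edgeNames, fr.em a ∉ G.edgeNames) ∧ (∀ A ∈ G.boxNames, fr.bm A ∉ G.boxNames)

/-- The four !-box operations. -/
inductive BOp : Type
  | exp (A : BoxName) (fr : Freshness)
  | kill (A : BoxName)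
  | copy (A : BoxName) (fr : Freshness)
  | drop (A : BoxName)

/-- Apply a !-box operation. -/
def BOp.app {σ : Type} : BOp → Pretensor σ → Pretensor σ
  | .exp A fr, G => G.exp A fr
  | .kill A, G => G.kill A
  | .copy A fr, G => G.copy A fr
  | .drop A, G => G.drop A

/-- A !-box operation is applied appropriately: its freshness function (if any)
is a freshness function for the expression it is applied to. -/
def BOp.OK {σ : Type} : BOp → Pretensor σ → Prop
  | .exp _ fr, G => fr.IsFreshFor G
  | .copy _ fr, G => fr.IsFreshFor G
  | _, _ => True

def BOp.isExpKill : BOp → Prop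
  | .exp _ _ => True
  | .kill _ => True
  | _ => False

def BOp.notDrop : BOp → Prop
  | .drop _ => False
  | _ => True

/-- Apply a list of !-box operations, left to right. -/
def applyOps {σ : Type} : List BOp → Pretensor σ → Pretensor σ
  | [], G => G
  | op :: rest, G => applyOps rest (op.app G)

/-- Each operation in the list is applied appropriately. -/
def OpsOK {σ : Type} : List BOp → Pretensor σ → Prop
  | [], _ => True
  | op :: rest, G => op.OK G ∧ OpsOK rest (op.app G)

/-- An instantiation of `G`: a finite composite of (appropriately applied)
`Exp` and `Kill` operations whose result contains no !-boxes. -/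
def IsInst {σ : Type} (i : List BOp) (G : Pretensor σ) : Prop :=
  (∀ op ∈ i, op.isExpKill) ∧ OpsOK i G ∧ (applyOps i G).IsConcrete

/-- Compatible boundaries: identical free edges, the same !-boxes with the same
immediate-nesting relation, and equal contexts on free edges. -/
def Compatible {σ : Type} (G H : Pretensor σ) : Prop :=
  (∀ d, G.freeDir d ↔ H.freeDir d) ∧
  (∀ A, G.boxCount A ≠ 0 ↔ H.boxCount A ≠ 0) ∧
  (∀ A B, G.Prec A B ↔ H.Prec A B) ∧
  (∀ d, G.freeDir d → G.ctxOf d = H.ctxOf d)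

/-- The set of concrete instances of the !-tensor equation `G = H`. -/
def ConcInst {σ : Type} (G H : Pretensor σ) : Set (Pretensor σ × Pretensor σ) :=
  {p | ∃ i : List BOp, IsInst i G ∧ p = (applyOps i G, applyOps i H)}

end BangTensor

/-!
`Drop_A` removes only the outermost `A`-box, together with the outermost `A`-groups of the
generators not lying inside it. So edge counts are unchanged, box counts can only drop, and the
context of an edge changes by deleting one occurrence of `A`, from the node context if it
contains `A` and from the edge context otherwise. In a !-tensor expression `A` occurs at most
once in these two lists together (F2 for the node context, C2 and F2 for the edge context, C1
for both), so dropping acts on every context as filtering out `A`. Filtering preserves the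
disjointness of C1 and the list equations of C3. For C2, an edge-context chain
`⋯ ≺ X ≺ A ≺ Y ≺ ⋯` becomes `⋯ ≺ X ≺ Y ≺ ⋯`, because once `A` is gone, `X` sits
immediately inside `Y`.
-/

namespace List

variable {α : Type*} [BEq α] [LawfulBEq α]

def eraseLast (a : α) (l : List α) : List α := (l.reverse.erase a).reverse

@[simp]
theorem eraseLast_append_singleton_self (a : α) (l : List α) : (l ++ [a]).eraseLast a = l := by
  simp [eraseLast]

theorem eraseLast_append_singleton_of_ne {a b : α} (l : List α) (h : b ≠ a) :
    (l ++ [b]).eraseLast a = l.eraseLast a ++ [b] := by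
  simp [eraseLast, h]

theorem erase_eq_filter_of_count_le_one {a : α} {l : List α} (h : l.count a ≤ 1) :
    l.erase a = l.filter (· != a) := by
  induction l with
  | nil => rfl
  | cons x t ih =>
    by_cases hx : x = a
    · subst hx
      simp [filter_bne_eq_self_of_not_mem (count_eq_zero.mp (by simpa using h))]
    · simp [hx, ih (by simpa [count_cons, hx] using h)]

theorem eraseLast_eq_filter_of_count_le_one {a : α} {l : List α} (h : l.count a ≤ 1) :
    l.eraseLast a = l.filter (· != a) := by
  rw [eraseLast, erase_eq_filter_of_count_le_one (by simpa using h), filter_reverse,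
    reverse_reverse]

theorem IsChain.filter_bne_of_count_le_one {R S : α → α → Prop} {a : α} {l : List α}
    (hl : l.IsChain R) (hc : l.count a ≤ 1) (hRS : ∀ x y, x ≠ a → y ≠ a → R x y → S x y)
    (hbridge : ∀ x y, x ≠ a → y ≠ a → R x a → R a y → S x y) :
    (l.filter (· != a)).IsChain S := by
  have restrict : ∀ {l' : List α}, a ∉ l' → l'.IsChain R → l'.IsChain S := fun ha h' =>
    h'.imp_of_mem_imp fun x y hx hy =>
      hRS x y (ne_of_mem_of_not_mem hx ha) (ne_of_mem_of_not_mem hy ha)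
  by_cases ha : a ∈ l
  · obtain ⟨l₁, l₂, rfl⟩ := append_of_mem ha
    have h₁ : a ∉ l₁ := count_eq_zero.mp (by simp [count_append] at hc; omega)
    have h₂ : a ∉ l₂ := count_eq_zero.mp (by simp [count_append] at hc; omega)
    rw [isChain_append, List.isChain_cons] at hl
    obtain ⟨hc₁, ⟨hhead, hc₂⟩, hlink⟩ := hl
    rw [filter_append, filter_cons_of_neg (by simp), filter_bne_eq_self_of_not_mem h₁,
      filter_bne_eq_self_of_not_mem h₂]
    refine (restrict h₁ hc₁).append (restrict h₂ hc₂) fun x hx y hy => ?_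
    exact hbridge x y (ne_of_mem_of_not_mem (mem_of_mem_getLast? hx) h₁)
      (ne_of_mem_of_not_mem (mem_of_mem_head? hy) h₂) (hlink x hx a rfl) (hhead y hy)
  · rw [filter_bne_eq_self_of_not_mem ha]
    exact restrict ha hl

end List

namespace BangTensor

namespace EdgeTerm

theorem count_drop (A : BoxName) (d : DirEdge) : ∀ e : EdgeTerm, (e.drop A).count d = e.count d
  | eps | edge _ => rfl
  | cw e B | acw e B => by by_cases hB : B = A <;> simp [drop, count, hB, count_drop A d e]
  | cat e f => by simp [drop, count, count_drop A d e, count_drop A d f]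

theorem ectx_drop (A : BoxName) (d : DirEdge) :
    ∀ e : EdgeTerm, (e.drop A).ectx d = (e.ectx d).map (·.eraseLast A)
  | eps => rfl
  | edge d' => by by_cases hd : d' = d <;> simp [drop, ectx, hd, List.eraseLast]
  | cw e B | acw e B => by
    by_cases hB : B = A
    · subst hB
      cases h : e.ectx d <;> simp [drop, ectx, h]
    · cases h : e.ectx d <;>
        simp [drop, ectx, hB, ectx_drop A d e, h, List.eraseLast_append_singleton_of_ne _ hB]
  | cat e f => by
    cases h : e.ectx d <;> simp [drop, ectx, ectx_drop A d e, ectx_drop A d f, h]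

end EdgeTerm

namespace Pretensor

variable {σ : Type}

theorem edgeCount_drop (A : BoxName) (d : DirEdge) :
    ∀ G : Pretensor σ, (G.drop A).edgeCount d = G.edgeCount d
  | unit | idt _ _ => rfl
  | gen _ e => by simp [drop, edgeCount, EdgeTerm.count_drop]
  | box G B => by by_cases hB : B = A <;> simp [drop, edgeCount, hB, edgeCount_drop A d G]
  | prod G H => by simp [drop, edgeCount, edgeCount_drop A d G, edgeCount_drop A d H]

theorem boxCount_drop_le (A B : BoxName) :
    ∀ G : Pretensor σ, (G.drop A).boxCount B ≤ G.boxCount B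
  | unit | idt _ _ | gen _ _ => le_rfl
  | box G C => by
    by_cases hC : C = A
    · subst hC; simp [drop, boxCount]
    · simpa [drop, boxCount, hC] using boxCount_drop_le A B G
  | prod G H => Nat.add_le_add (boxCount_drop_le A B G) (boxCount_drop_le A B H)

theorem boxCount_drop_of_ne {A B : BoxName} (hBA : B ≠ A) :
    ∀ G : Pretensor σ, (G.drop A).boxCount B = G.boxCount B
  | unit | idt _ _ | gen _ _ => rfl
  | box G C => by
    by_cases hC : C = A
    · subst hC; simp [drop, boxCount, Ne.symm hBA]
    · simp [drop, boxCount, hC, boxCount_drop_of_ne hBA G]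
  | prod G H => by simp [drop, boxCount, boxCount_drop_of_ne hBA G, boxCount_drop_of_ne hBA H]

theorem boxCtx_drop_of_ne {A B : BoxName} (hBA : B ≠ A) :
    ∀ G : Pretensor σ, (G.drop A).boxCtx B = (G.boxCtx B).map (·.eraseLast A)
  | unit | idt _ _ | gen _ _ => rfl
  | box G C => by
    by_cases hC : C = A
    · subst hC
      cases h : G.boxCtx B <;> simp [drop, boxCtx, Ne.symm hBA, h]
    · by_cases hCB : C = B
      · subst hCB
        simp [drop, boxCtx, hC, List.eraseLast]
      · cases h : G.boxCtx B <;> simp [drop, boxCtx, hC, hCB, boxCtx_drop_of_ne hBA G, h,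
          List.eraseLast_append_singleton_of_ne _ hC]
  | prod G H => by
    cases h : G.boxCtx B <;>
      simp [drop, boxCtx, boxCtx_drop_of_ne hBA G, boxCtx_drop_of_ne hBA H, h]

-- Contexts list boxes innermost first, so the outermost `A` is the last occurrence.
theorem ctx2_drop (A : BoxName) (d : DirEdge) :
    ∀ G : Pretensor σ, (G.drop A).ctx2 d = (G.ctx2 d).map fun p =>
      if A ∈ p.2 then (p.1, p.2.eraseLast A) else (p.1.eraseLast A, p.2)
  | unit => rfl
  | idt a b => by by_cases hd : d = .out a ∨ d = .inp b <;> simp [drop, ctx2, hd, List.eraseLast]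
  | gen _ e => by cases h : e.ectx d <;> simp [drop, ctx2, EdgeTerm.ectx_drop, h]
  | box G C => by
    by_cases hC : C = A
    · subst hC
      cases h : G.ctx2 d <;> simp [drop, ctx2, h]
    · cases h : G.ctx2 d with
      | none => simp [drop, ctx2, hC, ctx2_drop A d G, h]
      | some p =>
        by_cases hp : A ∈ p.2 <;>
          simp [drop, ctx2, hC, ctx2_drop A d G, h, hp, Ne.symm hC,
            List.eraseLast_append_singleton_of_ne _ hC]
  | prod G H => by
    cases h : G.ctx2 d <;> simp [drop, ctx2, ctx2_drop A d G, ctx2_drop A d H, h]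

theorem count_le_boxCount_of_boxCtx_eq {B : BoxName} (C : BoxName) :
    ∀ {G : Pretensor σ} {l : List BoxName}, G.boxCtx B = some l → (B :: l).count C ≤ G.boxCount C
  | unit, _, h | idt _ _, _, h | gen _ _, _, h => by simp [boxCtx] at h
  | box G D, l, h => by
    by_cases hD : D = B
    · subst hD
      obtain rfl : l = [] := by simpa [boxCtx] using h.symm
      simp [boxCount, List.count_singleton]
    · obtain ⟨l', hl', rfl⟩ : ∃ l', G.boxCtx B = some l' ∧ l' ++ [D] = l := by
        simpa [boxCtx, hD] using h
      have := count_le_boxCount_of_boxCtx_eq C hl'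
      simp only [boxCount, ← List.cons_append, List.count_append, List.count_singleton, beq_iff_eq]
      omega
  | prod G H, l, h => by
    simp only [boxCtx] at h
    cases hG : G.boxCtx B with
    | none =>
      simp only [hG, Option.orElse] at h
      exact (count_le_boxCount_of_boxCtx_eq C h).trans (by simp [boxCount])
    | some l' =>
      obtain rfl : l' = l := by simpa [hG] using h
      exact (count_le_boxCount_of_boxCtx_eq C hG).trans (by simp [boxCount])

theorem count_le_boxCount_of_ctx2_eq {d : DirEdge} (C : BoxName) :
    ∀ {G : Pretensor σ} {p : List BoxName × List BoxName}, G.ctx2 d = some p →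
      p.2.count C ≤ G.boxCount C
  | unit, _, h => by simp [ctx2] at h
  | idt a b, p, h => by
    obtain rfl : p = ([], []) := by by_cases hd : d = .out a ∨ d = .inp b <;> simp_all [ctx2]
    simp
  | gen _ e, p, h => by
    obtain ⟨l, -, rfl⟩ := Option.map_eq_some_iff.mp h
    simp
  | box G D, p, h => by
    obtain ⟨q, hq, rfl⟩ := Option.map_eq_some_iff.mp h
    have := count_le_boxCount_of_ctx2_eq C hq
    simp only [boxCount, List.count_append, List.count_singleton, beq_iff_eq]
    omega
  | prod G H, p, h => by
    simp only [ctx2] at h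
    cases hG : G.ctx2 d with
    | none =>
      simp only [hG, Option.orElse] at h
      exact (count_le_boxCount_of_ctx2_eq C h).trans (by simp [boxCount])
    | some q =>
      obtain rfl : q = p := by simpa [hG] using h
      exact (count_le_boxCount_of_ctx2_eq C hG).trans (by simp [boxCount])

theorem boxCount_pos_of_boxCtx_eq {G : Pretensor σ} {B : BoxName} {l : List BoxName}
    (h : G.boxCtx B = some l) : 0 < G.boxCount B :=
  lt_of_lt_of_le (by simp) (count_le_boxCount_of_boxCtx_eq B h)

theorem boxCtx_eq_of_boxCtx_eq_cons {B C : BoxName} :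
    ∀ {G : Pretensor σ} {l : List BoxName}, (∀ X, G.boxCount X ≤ 1) →
      G.boxCtx B = some (C :: l) → G.boxCtx C = some l
  | unit, _, _, h | idt _ _, _, _, h | gen _ _, _, _, h => by simp [boxCtx] at h
  | box G D, l, hF2, h => by
    have hF2G : ∀ X, G.boxCount X ≤ 1 := fun X => by have := hF2 X; simp [boxCount] at this; omega
    by_cases hDB : D = B
    · simp [boxCtx, hDB] at h
    obtain ⟨l', hl', hl⟩ : ∃ l', G.boxCtx B = some l' ∧ l' ++ [D] = C :: l := by
      simpa [boxCtx, hDB] using h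
    rcases l' with _ | ⟨C', l''⟩
    · obtain ⟨rfl, rfl⟩ : D = C ∧ [] = l := by simpa using hl
      simp [boxCtx]
    · obtain ⟨hC', rfl⟩ : C' = C ∧ l'' ++ [D] = l := by simpa using hl
      subst C'
      have hC := boxCtx_eq_of_boxCtx_eq_cons hF2G hl'
      have hDC : D ≠ C := by
        rintro rfl
        have := hF2 D
        have := boxCount_pos_of_boxCtx_eq hC
        simp [boxCount] at *
        omega
      simp [boxCtx, hDC, hC]
  | prod G H, l, hF2, h => by
    have hF2G : ∀ X, G.boxCount X ≤ 1 := fun X => by have := hF2 X; simp [boxCount] at this; omega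
    have hF2H : ∀ X, H.boxCount X ≤ 1 := fun X => by have := hF2 X; simp [boxCount] at this; omega
    simp only [boxCtx] at h ⊢
    cases hG : G.boxCtx B with
    | none =>
      simp only [hG, Option.orElse] at h
      have hH := boxCtx_eq_of_boxCtx_eq_cons hF2H h
      cases hGC : G.boxCtx C with
      | none => simpa [Option.orElse] using hH
      | some _ =>
        have := hF2 C
        have := boxCount_pos_of_boxCtx_eq hGC
        have := boxCount_pos_of_boxCtx_eq hH
        simp [boxCount] at *
        omega
    | some l' =>
      obtain rfl : l' = C :: l := by simpa [hG] using h
      simp [boxCtx_eq_of_boxCtx_eq_cons hF2G hG, Option.orElse]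

/-- A `≺`-chain strictly descends in nesting depth, so it has no repetitions. -/
theorem nodup_of_isChain_prec {G : Pretensor σ} (hF2 : ∀ X, G.boxCount X ≤ 1)
    {l : List BoxName} (hl : l.IsChain G.Prec) : l.Nodup := by
  let depth : BoxName → ℕ := fun B => ((G.boxCtx B).map List.length).getD 0
  have hdepth : ∀ B C, G.Prec B C → depth C < depth B := by
    rintro B C ⟨m, hm⟩
    simp [depth, hm, boxCtx_eq_of_boxCtx_eq_cons hF2 hm]
  have : l.Pairwise fun B C => depth C < depth B :=
    List.isChain_iff_pairwise.mp (hl.imp hdepth)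
  exact this.imp fun h hBC => (hBC ▸ h).false

theorem boxCtx_drop_eq_filter {G : Pretensor σ} (hF2 : ∀ X, G.boxCount X ≤ 1)
    {A B : BoxName} (hBA : B ≠ A) {l : List BoxName} (h : G.boxCtx B = some l) :
    (G.drop A).boxCtx B = some (l.filter (· != A)) := by
  have hcount : l.count A ≤ 1 :=
    (List.count_le_count_cons ..).trans ((count_le_boxCount_of_boxCtx_eq A h).trans (hF2 A))
  rw [boxCtx_drop_of_ne hBA, h, Option.map_some, List.eraseLast_eq_filter_of_count_le_one hcount]

theorem prec_drop_of_prec {G : Pretensor σ} (hF2 : ∀ X, G.boxCount X ≤ 1) {A B C : BoxName}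
    (hB : B ≠ A) (hC : C ≠ A) (h : G.Prec B C) : (G.drop A).Prec B C := by
  obtain ⟨m, hm⟩ := h
  exact ⟨m.filter (· != A), by simp [boxCtx_drop_eq_filter hF2 hB hm, hC]⟩

theorem prec_drop_of_prec_of_prec {G : Pretensor σ} (hF2 : ∀ X, G.boxCount X ≤ 1)
    {A B C : BoxName} (hB : B ≠ A) (hC : C ≠ A) (hBA : G.Prec B A) (hAC : G.Prec A C) :
    (G.drop A).Prec B C := by
  obtain ⟨m, hm⟩ := hBA
  obtain ⟨m', hm'⟩ := hAC
  obtain rfl : m = C :: m' := by simpa [boxCtx_eq_of_boxCtx_eq_cons hF2 hm] using hm'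
  exact ⟨m'.filter (· != A), by simp [boxCtx_drop_eq_filter hF2 hB hm, hC]⟩

theorem isChain_prec_drop_filter {G : Pretensor σ} (hF2 : ∀ X, G.boxCount X ≤ 1)
    (A : BoxName) {l : List BoxName} (hl : l.IsChain G.Prec) :
    (l.filter (· != A)).IsChain (G.drop A).Prec :=
  hl.filter_bne_of_count_le_one (List.nodup_iff_count_le_one.mp (nodup_of_isChain_prec hF2 hl) A)
    (fun _ _ => prec_drop_of_prec hF2) (fun _ _ => prec_drop_of_prec_of_prec hF2)

theorem ctx2_drop_eq_filter {G : Pretensor σ} {A : BoxName} {d : DirEdge}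
    {ec nc : List BoxName} (h : G.ctx2 d = some (ec, nc)) (hdisj : ec.Disjoint nc)
    (hec : ec.count A ≤ 1) (hnc : nc.count A ≤ 1) :
    (G.drop A).ctx2 d = some (ec.filter (· != A), nc.filter (· != A)) := by
  rw [ctx2_drop, h, Option.map_some]
  by_cases hA : A ∈ nc
  · simp [hA, List.eraseLast_eq_filter_of_count_le_one hnc,
      List.filter_bne_eq_self_of_not_mem fun h' => hdisj h' hA]
  · simp [hA, List.eraseLast_eq_filter_of_count_le_one hec,
      List.filter_bne_eq_self_of_not_mem hA]

theorem ctx2_drop_of_isTensorExpr {G : Pretensor σ} (hG : G.IsTensorExpr) (A : BoxName)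
    (d : DirEdge) :
    (G.drop A).ctx2 d = (G.ctx2 d).map fun p => (p.1.filter (· != A), p.2.filter (· != A)) := by
  obtain ⟨-, hF2, hC1, hC2, -⟩ := hG
  cases h : G.ctx2 d with
  | none => simp [ctx2_drop, h]
  | some p =>
    exact ctx2_drop_eq_filter h (hC1 _ _ _ h)
      (List.nodup_iff_count_le_one.mp (nodup_of_isChain_prec hF2 (hC2 _ _ _ h).2) A)
      ((count_le_boxCount_of_ctx2_eq A h).trans (hF2 A))

theorem exists_ctx2_eq_of_ctx2_drop_eq {G : Pretensor σ} (hG : G.IsTensorExpr) {A : BoxName}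
    {d : DirEdge} {ec' nc' : List BoxName} (h : (G.drop A).ctx2 d = some (ec', nc')) :
    ∃ ec nc, G.ctx2 d = some (ec, nc) ∧ ec.filter (· != A) = ec' ∧ nc.filter (· != A) = nc' := by
  rw [ctx2_drop_of_isTensorExpr hG] at h
  obtain ⟨⟨ec, nc⟩, hGd, h⟩ := Option.map_eq_some_iff.mp h
  exact ⟨ec, nc, hGd, by simpa using h⟩

end Pretensor

/-- If `G` is a !-tensor expression and `A` is a !-box name,
then `Drop_A(G)` is again a !-tensor expression. -/
theorem drop_preserves_tensorExpr {σ : Type} (G : Pretensor σ)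
    (hG : Pretensor.IsTensorExpr G) (A : BoxName) :
    Pretensor.IsTensorExpr (G.drop A) := by
  have ⟨hF1, hF2, hC1, hC2, hC3⟩ := hG
  refine ⟨fun d => (Pretensor.edgeCount_drop A d G).trans_le (hF1 d),
    fun B => (Pretensor.boxCount_drop_le A B G).trans (hF2 B), ?_, ?_, ?_⟩
  · rintro d _ _ h
    obtain ⟨ec, nc, hGd, rfl, rfl⟩ := Pretensor.exists_ctx2_eq_of_ctx2_drop_eq hG h
    exact List.disjoint_of_subset_left (List.filter_subset_self _)
      (List.disjoint_of_subset_right (List.filter_subset_self _) (hC1 d ec nc hGd))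
  · rintro d _ _ h
    obtain ⟨ec, nc, hGd, rfl, rfl⟩ := Pretensor.exists_ctx2_eq_of_ctx2_drop_eq hG h
    obtain ⟨hbox, hchain⟩ := hC2 d ec nc hGd
    refine ⟨fun B hB => ?_, Pretensor.isChain_prec_drop_filter hF2 A hchain⟩
    obtain ⟨hB, hBA⟩ := List.mem_filter.mp hB
    rw [Pretensor.boxCount_drop_of_ne (by simpa using hBA)]
    exact hbox B hB
  · rintro a _ _ _ _ hout hinp
    obtain ⟨eo, no, hGout, rfl, rfl⟩ := Pretensor.exists_ctx2_eq_of_ctx2_drop_eq hG hout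
    obtain ⟨ei, ni, hGinp, rfl, rfl⟩ := Pretensor.exists_ctx2_eq_of_ctx2_drop_eq hG hinp
    obtain ⟨es, bs, h₁, h₂⟩ := hC3 a eo no ei ni hGout hGinp
    exact ⟨es.filter (· != A), bs.filter (· != A), by simp only [← List.filter_append, h₁],
      by simp only [← List.filter_append, h₂]⟩

end BangTensor
end

section
/- If G and H are !-tensor expressions with G ≡ H, then Wk_A^K(G) ≡ Wk_A^K(H) (whenever both weakenings are well-formed); hence weakening lifts to an operation on !-tensors (≡-classes). -/
/-!
Weakening commutes with every generating rule of `≡`, except that bound renaming and identity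
contraction carry side conditions on edge names which can fail once `K` is inserted. Such a
clash is removed one directed edge of `K` at a time: rename it to a fresh name inside the
weakening and reconnect it to the old name by an identity tensor outside, which identity
contraction undoes, so `Wk_A^K(X) ≡ Wk_A^{K'}(X) · 1_{…}` uniformly in every `X` containing a
!-box `A`. The rule then only has to be checked for a `K` with fresh edge names, where the side
conditions survive weakening.
-/

namespace BangTensor

namespace DirEdge

def withName : DirEdge → EdgeName → DirEdge
  | out _, c => out c
  | inp _, c => inp c

@[simp] lemma name_withName (d : DirEdge) (c : EdgeName) : (d.withName c).name = c := by
  cases d <;> rfl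

@[simp] lemma name_partner (d : DirEdge) : d.partner.name = d.name := by
  cases d <;> rfl

end DirEdge

namespace EdgeTerm

def renameDir : DirEdge → EdgeName → EdgeTerm → EdgeTerm
  | .out b, c, e => e.renameOut b c
  | .inp b, c, e => e.renameInp b c

lemma count_renameDir (d : DirEdge) (c : EdgeName) (e : EdgeTerm) (d' : DirEdge) :
    (e.renameDir d c).count d' =
      (if d' = d.withName c then e.count d else 0) + (if d' = d then 0 else e.count d') := by
  cases d <;> induction e with
  | eps => simp [renameDir, renameOut, renameInp, count]
  | edge d₀ =>
    cases d₀ <;> cases d' <;> grind [renameDir, renameOut, renameInp, count, DirEdge.withName]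
  | cw e B ih => simpa [renameDir, renameOut, renameInp, count] using ih
  | acw e B ih => simpa [renameDir, renameOut, renameInp, count] using ih
  | cat e f ih₁ ih₂ =>
    simp only [renameDir, renameOut, renameInp, count] at ih₁ ih₂ ⊢
    rw [ih₁, ih₂]; split_ifs <;> omega

lemma renameDir_of_count_eq_zero {d : DirEdge} (c : EdgeName) {e : EdgeTerm} (h : e.count d = 0) :
    e.renameDir d c = e := by
  cases d <;> induction e with
  | edge d₀ => cases d₀ <;> simp_all [renameDir, renameOut, renameInp, count]
  | _ => simp_all [renameDir, renameOut, renameInp, count]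

lemma renameDir_withName_renameDir {d : DirEdge} {c : EdgeName} {e : EdgeTerm}
    (h : e.count (d.withName c) = 0) : (e.renameDir d c).renameDir (d.withName c) d.name = e := by
  cases d <;> induction e with
  | edge d₀ =>
    cases d₀ <;> grind [renameDir, renameOut, renameInp, count, DirEdge.withName, DirEdge.name]
  | _ => simp_all [renameDir, renameOut, renameInp, count, DirEdge.withName]

lemma mem_edgeNames_iff {e : EdgeTerm} {x : EdgeName} :
    x ∈ e.edgeNames ↔ ∃ d, e.count d ≠ 0 ∧ d.name = x := by
  induction e with
  | eps => simp [edgeNames, count]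
  | edge d => simp [edgeNames, count, eq_comm]
  | cat e f ih₁ ih₂ =>
    simp only [edgeNames, Set.mem_union, ih₁, ih₂, count]
    grind
  | _ => simpa [edgeNames, count]

lemma edgeNames_finite (e : EdgeTerm) : e.edgeNames.Finite := by
  induction e <;> simp_all [edgeNames]

lemma rename_eq_self {e : EdgeTerm} {f : EdgeName → EdgeName}
    (h : ∀ x ∈ e.edgeNames, f x = x) : e.rename f id = e := by
  induction e with
  | edge d => cases d <;> simp_all [rename, DirEdge.rename, edgeNames, DirEdge.name]
  | _ => simp_all [rename, edgeNames]

end EdgeTerm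

namespace Pretensor

variable {σ : Type}

def renameDir : DirEdge → EdgeName → Pretensor σ → Pretensor σ
  | .out b, c, X => X.renameOut b c
  | .inp b, c, X => X.renameInp b c

section renameDir

variable (d : DirEdge) (c : EdgeName)

@[simp] lemma renameDir_unit : (unit : Pretensor σ).renameDir d c = unit := by cases d <;> rfl

@[simp] lemma renameDir_gen (φ : σ) (e : EdgeTerm) :
    (gen φ e).renameDir d c = gen φ (e.renameDir d c) := by cases d <;> rfl

@[simp] lemma renameDir_box (G : Pretensor σ) (B : BoxName) :
    (box G B).renameDir d c = box (G.renameDir d c) B := by cases d <;> rfl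

@[simp] lemma renameDir_prod (G H : Pretensor σ) :
    (prod G H).renameDir d c = prod (G.renameDir d c) (H.renameDir d c) := by cases d <;> rfl

end renameDir

lemma edgeCount_renameDir (d : DirEdge) (c : EdgeName) (X : Pretensor σ) (d' : DirEdge) :
    (X.renameDir d c).edgeCount d' =
      (if d' = d.withName c then X.edgeCount d else 0) +
        (if d' = d then 0 else X.edgeCount d') := by
  induction X with
  | unit => simp [edgeCount]
  | idt a b =>
    cases d <;> cases d' <;> grind [renameDir, renameOut, renameInp, edgeCount, DirEdge.withName]
  | gen φ e => simpa [edgeCount] using EdgeTerm.count_renameDir d c e d'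
  | box G B ih => simpa [edgeCount] using ih
  | prod G H ih₁ ih₂ =>
    simp only [renameDir_prod, edgeCount, ih₁, ih₂]
    split_ifs <;> omega

lemma renameDir_of_not_occursDir {d : DirEdge} (c : EdgeName) {X : Pretensor σ}
    (h : ¬ X.occursDir d) : X.renameDir d c = X := by
  simp only [occursDir, not_not] at h
  induction X with
  | idt a b => cases d <;> grind [renameDir, renameOut, renameInp, edgeCount]
  | gen φ e => simpa using EdgeTerm.renameDir_of_count_eq_zero c h
  | _ => simp_all [edgeCount]

lemma renameDir_withName_renameDir {d : DirEdge} {c : EdgeName} {X : Pretensor σ}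
    (h : ¬ X.occursDir (d.withName c)) :
    (X.renameDir d c).renameDir (d.withName c) d.name = X := by
  simp only [occursDir, not_not] at h
  induction X with
  | idt a b =>
    cases d <;> grind [renameDir, renameOut, renameInp, edgeCount, DirEdge.withName, DirEdge.name]
  | gen φ e => simpa using EdgeTerm.renameDir_withName_renameDir h
  | _ => simp_all [edgeCount]

lemma mem_edgeNames_iff {X : Pretensor σ} {x : EdgeName} :
    x ∈ X.edgeNames ↔ ∃ d, X.occursDir d ∧ d.name = x := by
  simp only [occursDir]
  induction X with
  | unit => simp [edgeNames, edgeCount]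
  | idt a b =>
    simp only [edgeNames, edgeCount, Set.mem_insert_iff, Set.mem_singleton_iff]
    constructor
    · rintro (rfl | rfl)
      · exact ⟨.out x, by simp, rfl⟩
      · exact ⟨.inp x, by simp, rfl⟩
    · rintro ⟨d, hd, rfl⟩
      split_ifs at hd <;> simp_all [DirEdge.name]
  | gen φ e => exact EdgeTerm.mem_edgeNames_iff
  | box G B ih => exact ih
  | prod G H ih₁ ih₂ =>
    simp only [edgeNames, Set.mem_union, ih₁, ih₂, edgeCount]
    grind

lemma not_occursDir_of_name_notMem {X : Pretensor σ} {d : DirEdge} (h : d.name ∉ X.edgeNames) :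
    ¬ X.occursDir d :=
  fun hd => h (mem_edgeNames_iff.2 ⟨d, hd, rfl⟩)

lemma edgeNames_finite (X : Pretensor σ) : X.edgeNames.Finite := by
  induction X with
  | gen φ e => exact EdgeTerm.edgeNames_finite e
  | _ => simp_all [edgeNames]

lemma rename_eq_self {X : Pretensor σ} {f : EdgeName → EdgeName}
    (h : ∀ x ∈ X.edgeNames, f x = x) : X.rename f id = X := by
  induction X with
  | gen φ e => simpa [rename] using EdgeTerm.rename_eq_self h
  | _ => simp_all [rename, edgeNames]

/-- The identity tensor with ends `d.partner` and `d.withName a`. -/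
def wire : DirEdge → EdgeName → Pretensor σ
  | .out b, a => idt a b
  | .inp b, a => idt b a

lemma Equiv.contract (G : Pretensor σ) (L : List (Pretensor σ × BoxName)) (d : DirEdge)
    (a : EdgeName) (h : G.occursDir d) (h' : ¬ G.occursDir d.partner) :
    Equiv (prod G (nest L (wire d a))) (prod (G.renameDir d a) (nest L unit)) := by
  cases d with
  | out b => exact .contract_out G L a b h h'
  | inp b => exact .contract_inp G L a b h h'

lemma nest_append_singleton (L : List (Pretensor σ × BoxName)) (p : Pretensor σ × BoxName)
    (X : Pretensor σ) : nest (L ++ [p]) X = box (prod p.1 (nest L X)) p.2 := by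
  induction L generalizing X with
  | nil => rfl
  | cons q L ih => exact ih _

section wk

variable (A : BoxName) (K : Pretensor σ)

@[simp] lemma wk_unit : wk A K (unit : Pretensor σ) = unit := rfl

@[simp] lemma wk_idt (a b : EdgeName) : wk A K (idt a b) = idt a b := rfl

@[simp] lemma wk_gen (φ : σ) (e : EdgeTerm) : wk A K (gen φ e) = gen φ e := rfl

@[simp] lemma wk_prod (G H : Pretensor σ) : wk A K (prod G H) = prod (wk A K G) (wk A K H) := rfl

lemma wk_box (G : Pretensor σ) (B : BoxName) :
    wk A K (box G B) = if B = A then box (prod G K) B else box (wk A K G) B := rfl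

/-- The number of outermost `A`-boxes: `wk A K` puts one copy of `K` into each of them. -/
def wkSites : Pretensor σ → ℕ
  | box G B => if B = A then 1 else wkSites G
  | prod G H => wkSites G + wkSites H
  | _ => 0

lemma edgeCount_wk (X : Pretensor σ) (d : DirEdge) :
    (wk A K X).edgeCount d = X.edgeCount d + wkSites A X * K.edgeCount d := by
  induction X with
  | box G B ih => by_cases hB : B = A <;> simp [wk_box, wkSites, edgeCount, hB, ih]
  | prod G H ih₁ ih₂ => simp only [wk_prod, wkSites, edgeCount, ih₁, ih₂]; ring
  | _ => simp [wkSites, edgeCount]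

lemma occursDir_wk {X : Pretensor σ} {d : DirEdge} :
    (wk A K X).occursDir d ↔ X.occursDir d ∨ wkSites A X ≠ 0 ∧ K.occursDir d := by
  simp only [occursDir, edgeCount_wk, ne_eq, Nat.add_eq_zero_iff, mul_eq_zero]
  tauto

lemma wk_of_wkSites_eq_zero {X : Pretensor σ} (h : wkSites A X = 0) : wk A K X = X := by
  induction X with
  | box G B ih => by_cases hB : B = A <;> simp_all [wk_box, wkSites]
  | prod G H ih₁ ih₂ => simp_all [wkSites]
  | _ => rfl

lemma edgeNames_wk_subset (X : Pretensor σ) :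
    (wk A K X).edgeNames ⊆ X.edgeNames ∪ K.edgeNames := by
  intro x hx
  obtain ⟨d, hd, rfl⟩ := mem_edgeNames_iff.1 hx
  rcases (occursDir_wk A K).1 hd with hX | ⟨-, hK⟩
  · exact Or.inl (mem_edgeNames_iff.2 ⟨d, hX, rfl⟩)
  · exact Or.inr (mem_edgeNames_iff.2 ⟨d, hK, rfl⟩)

lemma renameDir_wk (d : DirEdge) (c : EdgeName) (X : Pretensor σ) :
    (wk A K X).renameDir d c = wk A (K.renameDir d c) (X.renameDir d c) := by
  induction X with
  | idt a b => cases d <;> rfl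
  | box G B ih => by_cases hB : B = A <;> simp [wk_box, hB, ih]
  | prod G H ih₁ ih₂ => simp [ih₁, ih₂]
  | _ => simp

lemma rename_wk (f : EdgeName → EdgeName) (X : Pretensor σ) :
    (wk A K X).rename f id = wk A (K.rename f id) (X.rename f id) := by
  induction X with
  | box G B ih => by_cases hB : B = A <;> simp [wk_box, hB, rename, ih]
  | prod G H ih₁ ih₂ => simp [rename, ih₁, ih₂]
  | _ => rfl

@[simp] lemma wkSites_renameDir (d : DirEdge) (c : EdgeName) (X : Pretensor σ) :
    wkSites A (X.renameDir d c) = wkSites A X := by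
  induction X with
  | idt a b => cases d <;> rfl
  | _ => simp_all [wkSites]

@[simp] lemma wkSites_rename (f : EdgeName → EdgeName) (X : Pretensor σ) :
    wkSites A (X.rename f id) = wkSites A X := by
  induction X <;> simp_all [wkSites, rename]

lemma wkSites_nest (L : List (Pretensor σ × BoxName)) {X Y : Pretensor σ}
    (h : wkSites A X = wkSites A Y) : wkSites A (nest L X) = wkSites A (nest L Y) := by
  induction L generalizing X Y with
  | nil => exact h
  | cons p L ih => exact ih (by simp only [wkSites, h])

lemma exists_equiv_wk_nest (L : List (Pretensor σ × BoxName)) :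
    ∃ L', ∀ X, wk A K X = X → Equiv (wk A K (nest L X)) (nest L' X) := by
  induction L using List.reverseRecOn with
  | nil => exact ⟨[], fun X hX => by rw [nest, hX]; exact .refl X⟩
  | append_singleton L p ih =>
    obtain ⟨L', hL'⟩ := ih
    obtain ⟨P, B⟩ := p
    by_cases hB : B = A
    · refine ⟨L ++ [(prod P K, B)], fun X _ => ?_⟩
      simp only [nest_append_singleton, wk_box, if_pos hB]
      exact .box_congr B <| ((Equiv.prod_assoc _ _ _).trans
        (.prod_congr (.refl P) (.prod_comm _ _))).trans (Equiv.prod_assoc _ _ _).symm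
    · refine ⟨L' ++ [(wk A K P, B)], fun X hX => ?_⟩
      simp only [nest_append_singleton, wk_box, if_neg hB, wk_prod]
      exact .box_congr B (.prod_congr (.refl _) (hL' X hX))

lemma Equiv.wkSites_eq {X Y : Pretensor σ} (h : Equiv X Y) : wkSites A X = wkSites A Y := by
  induction h with
  | refl => rfl
  | symm _ ih => exact ih.symm
  | trans _ _ ih₁ ih₂ => exact ih₁.trans ih₂
  | prod_congr _ _ ih₁ ih₂ => simp only [wkSites, ih₁, ih₂]
  | box_congr B _ ih => simp only [wkSites, ih]
  | gen_congr => rfl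
  | prod_assoc => simp only [wkSites, add_assoc]
  | prod_comm => simp only [wkSites, add_comm]
  | prod_unit => simp only [wkSites, add_zero]
  | bound_rename => simp [renameEdgeName]
  | contract_inp G L a b =>
    exact congrArg₂ (· + ·) (wkSites_renameDir A (.inp b) a G).symm (wkSites_nest A L rfl)
  | contract_out G L a b =>
    exact congrArg₂ (· + ·) (wkSites_renameDir A (.out b) a G).symm (wkSites_nest A L rfl)

lemma equiv_wk_of_renameDir {X : Pretensor σ} (hX : wkSites A X ≠ 0) {d : DirEdge}
    (hd : K.occursDir d) {c : EdgeName} (hcX : c ∉ X.edgeNames) (hcK : c ∉ K.edgeNames) :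
    Equiv (prod (wk A (K.renameDir d c) X) (wire (d.withName c) d.name)) (wk A K X) := by
  have hocc : (wk A (K.renameDir d c) X).occursDir (d.withName c) := by
    refine (occursDir_wk A _).2 (.inr ⟨hX, ?_⟩)
    rw [occursDir, edgeCount_renameDir, if_pos rfl]
    exact fun h0 => hd (by omega)
  have hnocc : ¬ (wk A (K.renameDir d c) X).occursDir (d.withName c).partner := by
    have hpX := not_occursDir_of_name_notMem (d := (d.withName c).partner) (by simpa using hcX)
    have hpK := not_occursDir_of_name_notMem (d := (d.withName c).partner) (by simpa using hcK)
    rw [occursDir_wk]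
    simp only [occursDir, edgeCount_renameDir, not_not] at hpX hpK ⊢
    cases d <;> simp_all [DirEdge.withName, DirEdge.partner]
  have hback : (wk A (K.renameDir d c) X).renameDir (d.withName c) d.name = wk A K X := by
    rw [renameDir_wk, renameDir_withName_renameDir (not_occursDir_of_name_notMem (by simpa)),
      renameDir_of_not_occursDir _ (not_occursDir_of_name_notMem (by simpa))]
  have hcontr := Equiv.contract (wk A (K.renameDir d c) X) [] (d.withName c) d.name hocc hnocc
  rw [hback] at hcontr
  exact hcontr.trans (.prod_unit _)

theorem Equiv.wk_of_forall_fresh {X Y : Pretensor σ} (hXY : Equiv X Y) (U : Finset EdgeName)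
    (hfresh : ∀ K : Pretensor σ, (∀ x ∈ K.edgeNames, x ∉ U) →
      Equiv (wk A K X) (wk A K Y)) :
    Equiv (wk A K X) (wk A K Y) := by
  by_cases hX : wkSites A X = 0
  · have hY : wkSites A Y = 0 := hXY.wkSites_eq A ▸ hX
    rwa [wk_of_wkSites_eq_zero A K hX, wk_of_wkSites_eq_zero A K hY]
  have hY : wkSites A Y ≠ 0 := hXY.wkSites_eq A ▸ hX
  -- `T` bounds the directed edges of `K` whose names still clash with `U`.
  suffices key : ∀ (T : Finset DirEdge) (K : Pretensor σ),
      (∀ d, K.occursDir d → d.name ∈ U → d ∈ T) → Equiv (wk A K X) (wk A K Y) from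
    key (U.image .out ∪ U.image .inp) K fun d _ hd => by cases d <;> simpa [DirEdge.name] using hd
  intro T
  induction T using Finset.induction_on with
  | empty =>
    refine fun K hK => hfresh K fun x hx hxU => ?_
    obtain ⟨d, hd, rfl⟩ := mem_edgeNames_iff.1 hx
    simpa using hK d hd hxU
  | insert d T _ ih =>
    intro K hK
    by_cases hd : K.occursDir d
    swap
    · exact ih K fun d' hd' hU =>
        (Finset.mem_insert.1 (hK d' hd' hU)).resolve_left (by rintro rfl; exact hd hd')
    obtain ⟨c, hc⟩ := (((U.finite_toSet.union X.edgeNames_finite).union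
      Y.edgeNames_finite).union K.edgeNames_finite).exists_notMem
    simp only [Set.mem_union, Finset.mem_coe, not_or] at hc
    obtain ⟨⟨⟨hcU, hcX⟩, hcY⟩, hcK⟩ := hc
    have hK' : ∀ d', (K.renameDir d c).occursDir d' → d'.name ∈ U → d' ∈ T := by
      intro d' hd' hU
      have hd'c : d' ≠ d.withName c := by rintro rfl; exact hcU (by simpa using hU)
      rw [occursDir, edgeCount_renameDir, if_neg hd'c, zero_add] at hd'
      split_ifs at hd' with hdd
      · exact absurd rfl hd'
      · exact (Finset.mem_insert.1 (hK d' hd' hU)).resolve_left hdd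
    exact (equiv_wk_of_renameDir A K hX hd hcX hcK).symm.trans
      ((Equiv.prod_congr (ih _ hK') (.refl _)).trans (equiv_wk_of_renameDir A K hY hd hcY hcK))

lemma equiv_wk_renameEdgeName {G : Pretensor σ} {a c : EdgeName} (ha : G.occursDir (.out a))
    (ha' : G.occursDir (.inp a)) (hcG : c ∉ G.edgeNames) (haK : a ∉ K.edgeNames)
    (hcK : c ∉ K.edgeNames) : Equiv (wk A K G) (wk A K (G.renameEdgeName a c)) := by
  have hK : K.rename (fun x => if x = a then c else x) id = K :=
    rename_eq_self fun x hx => if_neg (by rintro rfl; exact haK hx)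
  have hwk : wk A K (G.renameEdgeName a c) = (wk A K G).renameEdgeName a c := by
    rw [renameEdgeName, renameEdgeName, rename_wk, hK]
  rw [hwk]
  exact .bound_rename _ a c ((occursDir_wk A K).2 (.inl ha)) ((occursDir_wk A K).2 (.inl ha'))
    fun hc => (edgeNames_wk_subset A K G hc).elim hcG hcK

lemma equiv_wk_contract {G : Pretensor σ} (L : List (Pretensor σ × BoxName)) {d : DirEdge}
    (a : EdgeName) (h : G.occursDir d) (h' : ¬ G.occursDir d.partner)
    (hK : d.name ∉ K.edgeNames) :
    Equiv (wk A K (prod G (nest L (wire d a))))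
      (wk A K (prod (G.renameDir d a) (nest L unit))) := by
  obtain ⟨L', hL'⟩ := exists_equiv_wk_nest A K L
  have hKd' : ¬ K.occursDir d.partner := not_occursDir_of_name_notMem (by simpa using hK)
  have hren : (wk A K G).renameDir d a = wk A K (G.renameDir d a) := by
    rw [renameDir_wk, renameDir_of_not_occursDir a (not_occursDir_of_name_notMem hK)]
  have hcontr := Equiv.contract (wk A K G) L' d a ((occursDir_wk A K).2 (.inl h))
    (by rw [occursDir_wk]; tauto)
  rw [hren] at hcontr
  simp only [wk_prod]
  exact (Equiv.prod_congr (.refl _) (hL' _ (by cases d <;> rfl))).trans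
    (hcontr.trans (.prod_congr (.refl _) (hL' unit rfl).symm))

end wk

theorem Equiv.wk {G H : Pretensor σ} (h : Equiv G H) (A : BoxName) (K : Pretensor σ) :
    Equiv (Pretensor.wk A K G) (Pretensor.wk A K H) := by
  induction h with
  | refl => exact .refl _
  | symm _ ih => exact ih.symm
  | trans _ _ ih₁ ih₂ => exact ih₁.trans ih₂
  | prod_congr _ _ ih₁ ih₂ => exact .prod_congr ih₁ ih₂
  | box_congr B h ih =>
    simp only [wk_box]
    split_ifs
    · exact .box_congr B (.prod_congr h (.refl K))
    · exact .box_congr B ih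
  | gen_congr φ h => exact .gen_congr φ h
  | prod_assoc => exact .prod_assoc _ _ _
  | prod_comm => exact .prod_comm _ _
  | prod_unit => exact .prod_unit _
  | bound_rename G a c ha ha' hc =>
    exact (Equiv.bound_rename G a c ha ha' hc).wk_of_forall_fresh A K {a, c} fun K hK =>
      equiv_wk_renameEdgeName A K ha ha' hc (fun h => hK a h (by simp)) fun h => hK c h (by simp)
  | contract_inp G L a b h h' =>
    exact (Equiv.contract_inp G L a b h h').wk_of_forall_fresh A K {b} fun K hK =>
      equiv_wk_contract A K L (d := .inp b) a h h' fun h => hK b h (by simp)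
  | contract_out G L a b h h' =>
    exact (Equiv.contract_out G L a b h h').wk_of_forall_fresh A K {b} fun K hK =>
      equiv_wk_contract A K L (d := .out b) a h h' fun h => hK b h (by simp)

end Pretensor

theorem wk_preserves_equiv_general {σ : Type} (G H K : Pretensor σ) (A : BoxName)
    (h : Pretensor.Equiv G H) :
    Pretensor.Equiv (Pretensor.wk A K G) (Pretensor.wk A K H) :=
  h.wk A K

/-- If `G` and `H` are !-tensor expressions with `G ≡ H`, then
`Wk_A^K(G) ≡ Wk_A^K(H)` whenever both weakenings are well-formed; hence
weakening lifts to an operation on !-tensors (`≡`-classes). -/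
theorem wk_preserves_equiv {σ : Type} (G H K : Pretensor σ) (A : BoxName)
    (hG : Pretensor.IsTensorExpr G) (hH : Pretensor.IsTensorExpr H)
    (hwkG : Pretensor.IsTensorExpr (Pretensor.wk A K G))
    (hwkH : Pretensor.IsTensorExpr (Pretensor.wk A K H))
    (h : Pretensor.Equiv G H) :
    Pretensor.Equiv (Pretensor.wk A K G) (Pretensor.wk A K H) :=
  wk_preserves_equiv_general G H K A h

end BangTensor
end

section
/- The rules (Exp_B) and (Kill_B) are sound with respect to the concrete-instance semantics: for any !-tensor equation G = H and !-box B, ⟦Exp_{B,fr}(G) = Exp_{B,fr}(H)⟧ ⊆ ⟦G = H⟧ and ⟦Kill_B(G) = Kill_B(H)⟧ ⊆ ⟦G = H⟧; that is, every instantiation of the conclusion extends to an instantiation of the premise producing the same concrete equation. -/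
namespace BangTensor

/-- The rules `(Exp_B)` and `(Kill_B)` are sound with respect
to the concrete-instance semantics: every concrete instance of the conclusion
is a concrete instance of the premise. -/
theorem exp_kill_sound {σ : Type} (G H : Pretensor σ)
    (hG : Pretensor.IsTensorExpr G) (hH : Pretensor.IsTensorExpr H)
    (hcmp : Compatible G H) (B : BoxName) (fr : Freshness)
    (hfrG : fr.IsFreshFor G) (hfrH : fr.IsFreshFor H) :
    ConcInst (G.exp B fr) (H.exp B fr) ⊆ ConcInst G H ∧
    ConcInst (G.kill B) (H.kill B) ⊆ ConcInst G H := by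
  constructor
  · rintro p ⟨i, ⟨hek, hok, hconc⟩, hp⟩
    exact ⟨BOp.exp B fr :: i,
      ⟨by intro op hop; cases hop with | head => trivial | tail _ h => exact hek op h, ⟨hfrG, hok⟩, hconc⟩, hp⟩
  · rintro p ⟨i, ⟨hek, hok, hconc⟩, hp⟩
    exact ⟨BOp.kill B :: i,
      ⟨by intro op hop; cases hop with | head => trivial | tail _ h => exact hek op h, ⟨trivial, hok⟩, hconc⟩, hp⟩

end BangTensor
end
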